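/- The top type-normalisation rewriting relation ⟹ is terminating (strongly normalising): there is no infinite sequence σ₁ ⟹ σ₂ ⟹ σ₃ ⟹ …. -/
import Mathlib


namespace TypeIso

open Relation

/-- Untyped λ-terms with named variables. -/
inductive Term : Type
  | var : ℕ → Term
  | app : Term → Term → Term
  | lam : ℕ → Term → Term
deriving DecidableEq

namespace Term

/-- Free variables. -/
def fv : Term → Finset ℕ
  | var x => {x}
  | app M N => fv M ∪ fv N
  | lam x M => fv M \ {x}

/-- Substitution `M[N/x]` (naive; adequate for the linear terms considered). -/
def subst : Term → ℕ → Term → Term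
  | var y, x, N => if y = x then N else var y
  | app M₁ M₂, x, N => app (subst M₁ x N) (subst M₂ x N)
  | lam y M, x, N => if y = x then lam y M else lam y (subst M x N)

end Term

open Term

/-- One-step β-reduction. -/
inductive Beta : Term → Term → Prop
  | beta (x M N) : Beta (Term.app (Term.lam x M) N) (Term.subst M x N)
  | appL {M M'} (N) : Beta M M' → Beta (Term.app M N) (Term.app M' N)
  | appR (M) {N N'} : Beta N N' → Beta (Term.app M N) (Term.app M N')
  | lam (x) {M M'} : Beta M M' → Beta (Term.lam x M) (Term.lam x M')

/-- One-step η-reduction. -/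
inductive Eta : Term → Term → Prop
  | eta (x M) : x ∉ fv M → Eta (Term.lam x (Term.app M (Term.var x))) M
  | appL {M M'} (N) : Eta M M' → Eta (Term.app M N) (Term.app M' N)
  | appR (M) {N N'} : Eta N N' → Eta (Term.app M N) (Term.app M N')
  | lam (x) {M M'} : Eta M M' → Eta (Term.lam x M) (Term.lam x M')

def BetaStar : Term → Term → Prop := ReflTransGen Beta
def EtaStar : Term → Term → Prop := ReflTransGen Eta
/-- η-expansion: the converse of one-step η-reduction. -/
def EtaExp : Term → Term → Prop := fun a b => Eta b a
def EtaExpStar : Term → Term → Prop := ReflTransGen EtaExp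
def BetaConv : Term → Term → Prop := EqvGen Beta
def BetaEta : Term → Term → Prop := fun a b => Beta a b ∨ Eta a b
def BetaEtaConv : Term → Term → Prop := EqvGen BetaEta

def BetaEtaRed : Term → Term → Prop := ReflTransGen BetaEta

/-- `appList h [a₁,…,aₙ] = h a₁ … aₙ`. -/
def appList (h : Term) (args : List Term) : Term := args.foldl Term.app h
/-- `lamList [y₁,…,yₙ] M = λ y₁ … yₙ. M`. -/
def lamList (xs : List ℕ) (body : Term) : Term := xs.foldr Term.lam body

/-- β-normal finite hereditary permutators:
`λ x y₁ … yₙ. x (P₁ y_{π(1)}) … (Pₙ y_{π(n)})` with each `Pᵢ` an FHP. -/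
inductive FHPnf : Term → Prop
  | mk (x : ℕ) (ys : List ℕ) (Ps : List Term) (π : Equiv.Perm (Fin ys.length))
      (hlen : Ps.length = ys.length)
      (hx : x ∉ ys) (hnd : ys.Nodup)
      (hPs : ∀ P ∈ Ps, FHPnf P) :
      FHPnf (Term.lam x (lamList ys (appList (Term.var x)
        (List.ofFn fun i : Fin ys.length =>
          Term.app (Ps.get (Fin.cast hlen.symm i)) (Term.var (ys.get (π i)))))))

/-- Finite hereditary permutators (modulo β-conversion). -/
def FHP (M : Term) : Prop := ∃ N, BetaConv M N ∧ FHPnf N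

/-- β-normal finite hereditary identities:
`λ x y₁ … yₙ. x (Id₁ y₁) … (Idₙ yₙ)` with each `Idᵢ` an FHI. -/
inductive FHInf : Term → Prop
  | mk (x : ℕ) (ys : List ℕ) (Ids : List Term)
      (hlen : Ids.length = ys.length)
      (hx : x ∉ ys) (hnd : ys.Nodup)
      (hIds : ∀ P ∈ Ids, FHInf P) :
      FHInf (Term.lam x (lamList ys (appList (Term.var x)
        (List.ofFn fun i : Fin ys.length =>
          Term.app (Ids.get (Fin.cast hlen.symm i)) (Term.var (ys.get i))))))

/-- Finite hereditary identities (modulo β-conversion). -/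
def FHI (M : Term) : Prop := ∃ N, BetaConv M N ∧ FHInf N

/-- Types with atoms, ω, arrow, intersection and union. -/
inductive Ty : Type
  | atom : ℕ → Ty
  | omega : Ty
  | arr : Ty → Ty → Ty
  | and : Ty → Ty → Ty
  | or : Ty → Ty → Ty
deriving DecidableEq

/-- Semantic type equivalence `≅`: the least congruence with
`φ ≅ ω→φ`, `ω ≅ ω→ω`, `σ ≅ σ∧ω ≅ ω∧σ`, `ω ≅ σ∨ω ≅ ω∨σ`. -/
inductive SemEq : Ty → Ty → Prop
  | refl (σ) : SemEq σ σ
  | symm : SemEq σ τ → SemEq τ σ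
  | trans : SemEq σ τ → SemEq τ ρ → SemEq σ ρ
  | arr : SemEq σ σ' → SemEq τ τ' → SemEq (Ty.arr σ τ) (Ty.arr σ' τ')
  | and : SemEq σ σ' → SemEq τ τ' → SemEq (Ty.and σ τ) (Ty.and σ' τ')
  | or : SemEq σ σ' → SemEq τ τ' → SemEq (Ty.or σ τ) (Ty.or σ' τ')
  | atomFun (a) : SemEq (Ty.atom a) (Ty.arr Ty.omega (Ty.atom a))
  | omegaFun : SemEq Ty.omega (Ty.arr Ty.omega Ty.omega)
  | andOmegaR (σ) : SemEq σ (Ty.and σ Ty.omega)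
  | andOmegaL (σ) : SemEq σ (Ty.and Ty.omega σ)
  | orOmegaR (σ) : SemEq Ty.omega (Ty.or σ Ty.omega)
  | orOmegaL (σ) : SemEq Ty.omega (Ty.or Ty.omega σ)

/-- Relevant environments, considered up to permutation in the rules. -/
abbrev Env := List (ℕ × Ty)

def Env.dom (Γ : Env) : List ℕ := Γ.map Prod.fst

def EnvDisj (Γ₁ Γ₂ : Env) : Prop := ∀ x, x ∈ Γ₁.dom → x ∉ Γ₂.dom

/-- The intersection-union type assignment system for linear λ-terms (Figure 1). -/
inductive Deriv : Env → Term → Ty → Prop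
  | ax (x σ) : Deriv [(x, σ)] (Term.var x) σ
  | eqv {Γ M σ τ} : Deriv Γ M σ → SemEq σ τ → Deriv Γ M τ
  | perm {Γ Γ' M σ} : Deriv Γ M σ → Γ.Perm Γ' → Deriv Γ' M σ
  | arrI {Γ x σ M τ} : Deriv ((x, σ) :: Γ) M τ → Deriv Γ (Term.lam x M) (Ty.arr σ τ)
  | arrE {Γ₁ Γ₂ M N σ τ} : Deriv Γ₁ M (Ty.arr σ τ) → Deriv Γ₂ N σ → EnvDisj Γ₁ Γ₂ →
      Deriv (Γ₁ ++ Γ₂) (Term.app M N) τ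
  | andI {Γ M σ τ} : Deriv Γ M σ → Deriv Γ M τ → Deriv Γ M (Ty.and σ τ)
  | andE₁ {Γ M σ τ} : Deriv Γ M (Ty.and σ τ) → Deriv Γ M σ
  | andE₂ {Γ M σ τ} : Deriv Γ M (Ty.and σ τ) → Deriv Γ M τ
  | orI₁ {Γ M σ τ} : Deriv Γ M σ → Deriv Γ M (Ty.or σ τ)
  | orI₂ {Γ M σ τ} : Deriv Γ M σ → Deriv Γ M (Ty.or τ σ)
  | orE {Γ₁ Γ₂ x M N σ τ ζ ρ} :
      Deriv ((x, Ty.and σ ζ) :: Γ₁) M ρ →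
      Deriv ((x, Ty.and τ ζ) :: Γ₁) M ρ →
      Deriv Γ₂ N (Ty.and (Ty.or σ τ) ζ) → EnvDisj Γ₁ Γ₂ →
      Deriv (Γ₁ ++ Γ₂) (Term.subst M x N) ρ

/-- Linear λ-terms: every free or bound variable occurs exactly once. -/
inductive Linear : Term → Prop
  | var (x) : Linear (Term.var x)
  | app {M N} : Linear M → Linear N → Disjoint (fv M) (fv N) → Linear (Term.app M N)
  | lam {x M} : Linear M → x ∈ fv M → Linear (Term.lam x M)

/-- A variable fresh for a finite set. -/
def freshVar (s : Finset ℕ) : ℕ := (s.sup id) + 1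

/-- Composition `λx. P (Q x)` with a fresh `x`. -/
def tcomp (P Q : Term) : Term :=
  Term.lam (freshVar (fv P ∪ fv Q))
    (Term.app P (Term.app Q (Term.var (freshVar (fv P ∪ fv Q)))))

/-- `P` and `Q` are inverse of each other: both compositions are βη-equal to the identity. -/
def InvPair (P Q : Term) : Prop :=
  ∃ x, BetaEtaConv (tcomp P Q) (Term.lam x (Term.var x)) ∧
       BetaEtaConv (tcomp Q P) (Term.lam x (Term.var x))

/-- Type isomorphism `σ ≈ τ`. -/
def TyIso (σ τ : Ty) : Prop :=
  ∃ P Q, FHP P ∧ FHP Q ∧ InvPair P Q ∧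
    Deriv [] P (Ty.arr σ τ) ∧ Deriv [] Q (Ty.arr τ σ)

/-- Strong type isomorphism `σ ≈ₛ τ`: proved by a finite hereditary identity. -/
def StrongIso (σ τ : Ty) : Prop :=
  ∃ Id, FHI Id ∧ Deriv [] Id (Ty.arr σ τ) ∧ Deriv [] Id (Ty.arr τ σ)

/-- The normalisation pre-order `≤` on types. -/
inductive NormLe : Ty → Ty → Prop
  | refl (σ) : NormLe σ σ
  | trans {σ τ ρ} : NormLe σ τ → NormLe τ ρ → NormLe σ ρ
  | leOmega (σ) : NormLe σ Ty.omega
  | andE₁ (σ τ) : NormLe (Ty.and σ τ) σ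
  | andE₂ (σ τ) : NormLe (Ty.and σ τ) τ
  | orI₁ (σ τ) : NormLe σ (Ty.or σ τ)
  | orI₂ (σ τ) : NormLe τ (Ty.or σ τ)
  | andI {σ τ ρ} : NormLe σ τ → NormLe σ ρ → NormLe σ (Ty.and τ ρ)
  | orE {σ τ ρ} : NormLe σ τ → NormLe ρ τ → NormLe (Ty.or σ ρ) τ
  | atomArr (a σ) : NormLe (Ty.atom a) (Ty.arr σ (Ty.atom a))
  | omegaArr (σ) : NormLe Ty.omega (Ty.arr σ Ty.omega)
  | arr {σ σ' τ τ'} : NormLe σ' σ → NormLe τ τ' → NormLe (Ty.arr σ τ) (Ty.arr σ' τ')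

/-- Inner type normalisation rules `σ ⇝ τ`. -/
inductive InnerStep : Ty → Ty → Prop
  | atomRule (a) : InnerStep (Ty.arr Ty.omega (Ty.atom a)) (Ty.atom a)
  | omegaRule {σ} : NormLe Ty.omega σ → σ ≠ Ty.omega → InnerStep σ Ty.omega
  | distArrAnd (σ τ ρ) :
      InnerStep (Ty.arr σ (Ty.and τ ρ)) (Ty.and (Ty.arr σ τ) (Ty.arr σ ρ))
  | distAndArr (σ τ ρ ζ) :
      InnerStep (Ty.arr (Ty.and (Ty.or σ τ) ρ) ζ)
                (Ty.arr (Ty.or (Ty.and σ ρ) (Ty.and τ ρ)) ζ)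
  | distOrArr (σ τ ρ) :
      InnerStep (Ty.arr (Ty.or σ τ) ρ) (Ty.and (Ty.arr σ ρ) (Ty.arr τ ρ))
  | distArrOr (σ τ ρ ζ) :
      InnerStep (Ty.arr σ (Ty.or (Ty.and τ ρ) ζ))
                (Ty.arr σ (Ty.and (Ty.or τ ζ) (Ty.or ρ ζ)))
  | eraseAnd {σ τ} : NormLe σ τ → InnerStep (Ty.and σ τ) σ
  | eraseOr {σ τ} : NormLe σ τ → InnerStep (Ty.or σ τ) τ

/-- Type contexts. -/
inductive TyCtx : Type
  | hole : TyCtx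
  | arrL : TyCtx → Ty → TyCtx
  | arrR : Ty → TyCtx → TyCtx
  | andL : TyCtx → Ty → TyCtx
  | andR : Ty → TyCtx → TyCtx
  | orL : TyCtx → Ty → TyCtx
  | orR : Ty → TyCtx → TyCtx

/-- Filling the hole of a type context. -/
def TyCtx.fill : TyCtx → Ty → Ty
  | TyCtx.hole, τ => τ
  | TyCtx.arrL C σ, τ => Ty.arr (C.fill τ) σ
  | TyCtx.arrR σ C, τ => Ty.arr σ (C.fill τ)
  | TyCtx.andL C σ, τ => Ty.and (C.fill τ) σ
  | TyCtx.andR σ C, τ => Ty.and σ (C.fill τ)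
  | TyCtx.orL C σ, τ => Ty.or (C.fill τ) σ
  | TyCtx.orR σ C, τ => Ty.or σ (C.fill τ)

/-- Top normalisation rules `σ ⟹ τ`: contextual closure of the inner rules,
plus `(σ∧τ)∨ρ ⟹ (σ∨ρ)∧(τ∨ρ)` at the top or in right-hand sides of arrows. -/
inductive TopStep : Ty → Ty → Prop
  | ctx {σ τ} (C : TyCtx) : InnerStep σ τ → TopStep (C.fill σ) (C.fill τ)
  | dist (σ τ ρ) :
      TopStep (Ty.or (Ty.and σ τ) ρ) (Ty.and (Ty.or σ ρ) (Ty.or τ ρ))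
  | arrR {τ τ'} (σ) : TopStep τ τ' → TopStep (Ty.arr σ τ) (Ty.arr σ τ')

open Classical in
/-- The normal form of a type w.r.t. the top normalisation rules. -/
noncomputable def nf (σ : Ty) : Ty :=
  if h : ∃ ν, Relation.ReflTransGen TopStep σ ν ∧ ∀ ρ, ¬ TopStep ν ρ then h.choose else σ

/-- `mkArrow [ξ₁,…,ξₙ] μ = ξ₁ → … → ξₙ → μ`. -/
def mkArrow (args : List Ty) (res : Ty) : Ty := args.foldr Ty.arr res

/-- Similarity between sequences of normal types. -/
inductive TySim : List Ty → List Ty → Prop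
  | refl (l) : TySim l l
  | symm {l r} : TySim l r → TySim r l
  | trans {l r s} : TySim l r → TySim r s → TySim l s
  | mergeAnd (l₁ l₂ r₁ r₂ : List Ty) (η₁ η₂ θ₁ θ₂ : Ty) :
      l₁.length = r₁.length →
      TySim (l₁ ++ η₁ :: η₂ :: l₂) (r₁ ++ θ₁ :: θ₂ :: r₂) →
      TySim (l₁ ++ nf (Ty.and η₁ η₂) :: l₂) (r₁ ++ nf (Ty.and θ₁ θ₂) :: r₂)
  | mergeOr (l₁ l₂ r₁ r₂ : List Ty) (η₁ η₂ θ₁ θ₂ : Ty) :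
      l₁.length = r₁.length →
      TySim (l₁ ++ η₁ :: η₂ :: l₂) (r₁ ++ θ₁ :: θ₂ :: r₂) →
      TySim (l₁ ++ nf (Ty.or η₁ η₂) :: l₂) (r₁ ++ nf (Ty.or θ₁ θ₂) :: r₂)
  | arrow (m n : ℕ) (ξ χ : Fin n → Fin m → Ty) (μ ν : Fin m → Ty)
      (π : Equiv.Perm (Fin n)) :
      (∀ i, TySim (List.ofFn (ξ i)) (List.ofFn (χ i))) →
      TySim (List.ofFn μ) (List.ofFn ν) →
      TySim (List.ofFn fun j => nf (mkArrow (List.ofFn fun i => ξ i j) (μ j)))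
            (List.ofFn fun j => nf (mkArrow (List.ofFn fun i => χ (π i) j) (ν j)))

/-- Position-dependent measure: first component for top/right positions,
second for left positions of arrows. -/
private def meas : Ty → ℕ × ℕ
  | Ty.atom _ => (3, 3)
  | Ty.omega => (2, 2)
  | Ty.arr σ τ => (2 ^ ((meas σ).2 * (meas τ).1), 2 ^ ((meas σ).2 * (meas τ).1))
  | Ty.and σ τ => ((meas σ).1 + (meas τ).1 + 1, (meas σ).2 * (meas τ).2)
  | Ty.or σ τ => ((meas σ).1 * (meas τ).1, (meas σ).2 + (meas τ).2 + 1)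

private lemma meas_two_le : ∀ σ : Ty, 2 ≤ (meas σ).1 ∧ 2 ≤ (meas σ).2 := by
  intro σ
  induction σ with
  | atom a => simp [meas]
  | omega => simp [meas]
  | arr σ τ ihσ ihτ =>
      have h : 1 ≤ (meas σ).2 * (meas τ).1 :=
        Nat.mul_pos (by omega) (by omega)
      constructor <;> simp only [meas] <;>
        calc 2 = 2 ^ 1 := by norm_num
        _ ≤ 2 ^ ((meas σ).2 * (meas τ).1) := Nat.pow_le_pow_right (by norm_num) h
  | and σ τ ihσ ihτ =>
      constructor
      · simp only [meas]; omega
      · simp only [meas]; nlinarith [ihσ.2, ihτ.2]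
  | or σ τ ihσ ihτ =>
      constructor
      · simp only [meas]; nlinarith [ihσ.1, ihτ.1]
      · simp only [meas]; omega

private lemma meas_gt_two : ∀ σ : Ty, σ ≠ Ty.omega →
    2 < (meas σ).1 ∧ 2 < (meas σ).2 := by
  intro σ hσ
  cases σ with
  | atom a => simp [meas]
  | omega => exact absurd rfl hσ
  | arr σ τ =>
      have hσ2 := (meas_two_le σ).2
      have hτ1 := (meas_two_le τ).1
      have h : 2 ≤ (meas σ).2 * (meas τ).1 := le_trans hσ2 (Nat.le_mul_of_pos_right _ (by omega))
      constructor <;> simp only [meas] <;>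
        calc 2 < 2 ^ 2 := by norm_num
        _ ≤ 2 ^ ((meas σ).2 * (meas τ).1) := Nat.pow_le_pow_right (by norm_num) h
  | and σ τ =>
      have h1 := (meas_two_le σ).1; have h2 := (meas_two_le τ).1
      have h3 := (meas_two_le σ).2; have h4 := (meas_two_le τ).2
      constructor
      · simp only [meas]; omega
      · simp only [meas]; nlinarith
  | or σ τ =>
      have h1 := (meas_two_le σ).1; have h2 := (meas_two_le τ).1
      have h3 := (meas_two_le σ).2; have h4 := (meas_two_le τ).2
      constructor
      · simp only [meas]; nlinarith
      · simp only [meas]; omega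

private lemma key_pow_sum (u v : ℕ) : 2 ^ u + 2 ^ v + 1 < 2 ^ (u + v + 2) := by
  have h1 : 2 ^ u ≤ 2 ^ (u + v) := Nat.pow_le_pow_right (by norm_num) (Nat.le_add_right _ _)
  have h2 : 2 ^ v ≤ 2 ^ (u + v) := Nat.pow_le_pow_right (by norm_num) (Nat.le_add_left _ _)
  have h3 : 1 ≤ 2 ^ (u + v) := Nat.one_le_two_pow
  have h4 : 2 ^ (u + v + 2) = 4 * 2 ^ (u + v) := by ring
  omega

private lemma pow_lt_pow_two {u v : ℕ} (h : u < v) : 2 ^ u < 2 ^ v :=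
  Nat.pow_lt_pow_right (by norm_num) h

private lemma inner_dec {σ τ : Ty} (h : InnerStep σ τ) :
    (meas τ).1 < (meas σ).1 ∧ (meas τ).2 < (meas σ).2 := by
  cases h with
  | atomRule a => constructor <;> simp [meas]
  | omegaRule hle hne =>
      have := meas_gt_two _ hne
      constructor <;> simp [meas] <;> omega
  | distArrAnd σ τ ρ =>
      set a := (meas σ).2 with ha
      set b := (meas τ).1 with hb
      set c := (meas ρ).1 with hc
      have ha2 : 2 ≤ a := (meas_two_le σ).2
      have hexp : a * b + a * c + 2 ≤ a * (b + c + 1) := by nlinarith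
      have hmono : 2 ^ (a * b + a * c + 2) ≤ 2 ^ (a * (b + c + 1)) :=
        Nat.pow_le_pow_right (by norm_num) hexp
      constructor
      · show 2 ^ (a * b) + 2 ^ (a * c) + 1 < 2 ^ (a * (b + c + 1))
        calc 2 ^ (a * b) + 2 ^ (a * c) + 1 < 2 ^ (a * b + a * c + 2) := key_pow_sum _ _
        _ ≤ _ := hmono
      · show 2 ^ (a * b) * 2 ^ (a * c) < 2 ^ (a * (b + c + 1))
        calc 2 ^ (a * b) * 2 ^ (a * c) = 2 ^ (a * b + a * c) := by rw [pow_add]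
        _ < 2 ^ (a * (b + c + 1)) := pow_lt_pow_two (by nlinarith)
  | distAndArr σ τ ρ ζ =>
      set x := (meas σ).2; set y := (meas τ).2; set z := (meas ρ).2
      set w := (meas ζ).1
      have hz : 2 ≤ z := (meas_two_le ρ).2
      have hw : 2 ≤ w := (meas_two_le ζ).1
      have harg : (x * z + y * z + 1) * w < ((x + y + 1) * z) * w := by nlinarith
      constructor <;>
      · show 2 ^ ((x * z + y * z + 1) * w) < 2 ^ (((x + y + 1) * z) * w)
        exact pow_lt_pow_two harg
  | distOrArr σ τ ρ =>
      set a := (meas σ).2; set b := (meas τ).2; set c := (meas ρ).1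
      have hc : 2 ≤ c := (meas_two_le ρ).1
      have hexp : a * c + b * c + 2 ≤ (a + b + 1) * c := by nlinarith
      constructor
      · show 2 ^ (a * c) + 2 ^ (b * c) + 1 < 2 ^ ((a + b + 1) * c)
        calc 2 ^ (a * c) + 2 ^ (b * c) + 1 < 2 ^ (a * c + b * c + 2) := key_pow_sum _ _
        _ ≤ _ := Nat.pow_le_pow_right (by norm_num) hexp
      · show 2 ^ (a * c) * 2 ^ (b * c) < 2 ^ ((a + b + 1) * c)
        calc 2 ^ (a * c) * 2 ^ (b * c) = 2 ^ (a * c + b * c) := by rw [pow_add]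
        _ < _ := pow_lt_pow_two (by nlinarith)
  | distArrOr σ τ ρ ζ =>
      set a := (meas σ).2; set x := (meas τ).1; set y := (meas ρ).1
      set z := (meas ζ).1
      have ha : 2 ≤ a := (meas_two_le σ).2
      have hz : 2 ≤ z := (meas_two_le ζ).1
      have harg : a * ((x * z) + (y * z) + 1) < a * ((x + y + 1) * z) := by nlinarith
      constructor <;>
      · show 2 ^ (a * (x * z + y * z + 1)) < 2 ^ (a * ((x + y + 1) * z))
        exact pow_lt_pow_two harg
  | eraseAnd hle =>
      rename_i t
      have h1 := (meas_two_le τ).1; have h2 := (meas_two_le t).1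
      have h3 := (meas_two_le τ).2; have h4 := (meas_two_le t).2
      constructor
      · show (meas τ).1 < (meas τ).1 + (meas t).1 + 1; omega
      · show (meas τ).2 < (meas τ).2 * (meas t).2; nlinarith
  | eraseOr hle =>
      rename_i s
      have h1 := (meas_two_le s).1; have h2 := (meas_two_le τ).1
      have h3 := (meas_two_le s).2; have h4 := (meas_two_le τ).2
      constructor
      · show (meas τ).1 < (meas s).1 * (meas τ).1; nlinarith
      · show (meas τ).2 < (meas s).2 + (meas τ).2 + 1; omega

private lemma ctx_dec (C : TyCtx) {σ τ : Ty}
    (h1 : (meas τ).1 < (meas σ).1) (h2 : (meas τ).2 < (meas σ).2) :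
    (meas (C.fill τ)).1 < (meas (C.fill σ)).1 ∧
    (meas (C.fill τ)).2 < (meas (C.fill σ)).2 := by
  induction C with
  | hole => exact ⟨h1, h2⟩
  | arrL C ρ ih =>
      have hρ := (meas_two_le ρ).1
      have harg : (meas (C.fill τ)).2 * (meas ρ).1 < (meas (C.fill σ)).2 * (meas ρ).1 :=
        (Nat.mul_lt_mul_right (by omega)).mpr ih.2
      exact ⟨pow_lt_pow_two harg, pow_lt_pow_two harg⟩
  | arrR ρ C ih =>
      have hρ := (meas_two_le ρ).2
      have harg : (meas ρ).2 * (meas (C.fill τ)).1 < (meas ρ).2 * (meas (C.fill σ)).1 :=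
        (Nat.mul_lt_mul_left (by omega)).mpr ih.1
      exact ⟨pow_lt_pow_two harg, pow_lt_pow_two harg⟩
  | andL C ρ ih =>
      have hρ1 := (meas_two_le ρ).1; have hρ2 := (meas_two_le ρ).2
      constructor
      · show (meas (C.fill τ)).1 + (meas ρ).1 + 1 < (meas (C.fill σ)).1 + (meas ρ).1 + 1
        omega
      · show (meas (C.fill τ)).2 * (meas ρ).2 < (meas (C.fill σ)).2 * (meas ρ).2
        exact (Nat.mul_lt_mul_right (by omega)).mpr ih.2
  | andR ρ C ih =>
      have hρ1 := (meas_two_le ρ).1; have hρ2 := (meas_two_le ρ).2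
      constructor
      · show (meas ρ).1 + (meas (C.fill τ)).1 + 1 < (meas ρ).1 + (meas (C.fill σ)).1 + 1
        omega
      · show (meas ρ).2 * (meas (C.fill τ)).2 < (meas ρ).2 * (meas (C.fill σ)).2
        exact (Nat.mul_lt_mul_left (by omega)).mpr ih.2
  | orL C ρ ih =>
      have hρ1 := (meas_two_le ρ).1; have hρ2 := (meas_two_le ρ).2
      constructor
      · show (meas (C.fill τ)).1 * (meas ρ).1 < (meas (C.fill σ)).1 * (meas ρ).1
        exact (Nat.mul_lt_mul_right (by omega)).mpr ih.1
      · show (meas (C.fill τ)).2 + (meas ρ).2 + 1 < (meas (C.fill σ)).2 + (meas ρ).2 + 1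
        omega
  | orR ρ C ih =>
      have hρ1 := (meas_two_le ρ).1; have hρ2 := (meas_two_le ρ).2
      constructor
      · show (meas ρ).1 * (meas (C.fill τ)).1 < (meas ρ).1 * (meas (C.fill σ)).1
        exact (Nat.mul_lt_mul_left (by omega)).mpr ih.1
      · show (meas ρ).2 + (meas (C.fill τ)).2 + 1 < (meas ρ).2 + (meas (C.fill σ)).2 + 1
        omega

private lemma top_dec {σ τ : Ty} (h : TopStep σ τ) : (meas τ).1 < (meas σ).1 := by
  induction h with
  | ctx C hin =>
      have := inner_dec hin
      exact (ctx_dec C this.1 this.2).1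
  | dist σ τ ρ =>
      have h1 := (meas_two_le σ).1; have h2 := (meas_two_le τ).1
      have h3 := (meas_two_le ρ).1
      show (meas σ).1 * (meas ρ).1 + (meas τ).1 * (meas ρ).1 + 1 <
        ((meas σ).1 + (meas τ).1 + 1) * (meas ρ).1
      nlinarith
  | arrR ρ h ih =>
      have hρ := (meas_two_le ρ).2
      exact pow_lt_pow_two ((Nat.mul_lt_mul_left (by omega)).mpr ih)

/-- The top normalisation rewriting relation is terminating: there is no
infinite rewriting sequence. -/
theorem topStep_terminating :
    ¬ ∃ f : ℕ → Ty, ∀ n : ℕ, TopStep (f n) (f (n + 1)) := by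
  rintro ⟨f, hf⟩
  have key : ∀ n : ℕ, (meas (f n)).1 + n ≤ (meas (f 0)).1 := by
    intro n
    induction n with
    | zero => omega
    | succ n ih =>
        have := top_dec (hf n)
        omega
  have h := key ((meas (f 0)).1 + 1)
  omega

end TypeIso
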